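/- Let ⋆ be the conjugate-linear map on 𝒜 ⊗_ℂ 𝒜 determined by ⋆(x⊗y) = ζ^{−pr}·x*⊗y* for x ∈ 𝒜_p, y ∈ 𝒜_r. Then for every a ∈ 𝒜 one has Δ(a*) = ⋆(Δ(a)); i.e. writing Δ(a) = Σ a₍₁₎⊗a₍₂₎ with homogeneous legs, Δ(a*) = Σ ζ^{−deg(a₍₁₎)·deg(a₍₂₎)}·(a₍₁₎)*⊗(a₍₂₎)*. -/

import Mathlib

open scoped TensorProduct

noncomputable section

/-- The monomial family `α^n γ^m (γ*)^k` (for `n ≥ 0`) resp. `(α*)^{-n} γ^m (γ*)^k`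
(for `n < 0`), indexed by `(n, m, k) ∈ ℤ × ℕ × ℕ`. -/
def suqMono {A : Type*} [Ring A] [StarRing A] (a g : A) (i : ℤ × ℕ × ℕ) : A :=
  (if 0 ≤ i.1 then a ^ i.1.toNat else (star a) ^ (-i.1).toNat) * g ^ i.2.1 * (star g) ^ i.2.2

/-- The degree-`p` homogeneous component `𝒜_p`: the `ℂ`-span of the basis monomials with
`m - k = p`. -/
def suqHomog {A : Type*} [Ring A] [Algebra ℂ A] [StarRing A] (a g : A) (p : ℤ) :
    Submodule ℂ A :=
  Submodule.span ℂ
    {x | ∃ i : ℤ × ℕ × ℕ, (i.2.1 : ℤ) - (i.2.2 : ℤ) = p ∧ x = suqMono a g i}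

/-- The defining relations of `Pol(SU_q(2))`. -/
def SUqRel {A : Type*} [Ring A] [Algebra ℂ A] [StarRing A] (q : ℂ) (a g : A) : Prop :=
  star a * a + star g * g = 1 ∧
  a * star a + ((‖q‖ : ℂ) ^ 2) • (star g * g) = 1 ∧
  g * star g = star g * g ∧
  a * g = (starRingEnd ℂ q) • (g * a) ∧
  a * star g = q • (star g * a)

/-- The monomials form a `ℂ`-basis. -/
def SUqBasis {A : Type*} [Ring A] [Algebra ℂ A] [StarRing A] (a g : A) : Prop :=
  LinearIndependent ℂ (suqMono a g) ∧
  Submodule.span ℂ (Set.range (suqMono a g)) = ⊤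

/-- The characterizing properties of the antipode `S`. -/
def SUqAntipode {A : Type*} [Ring A] [Algebra ℂ A] [StarRing A] (q : ℂ) (a g : A)
    (S : A →ₗ[ℂ] A) : Prop :=
  S 1 = 1 ∧ S a = star a ∧ S (star a) = a ∧
  S g = (-(starRingEnd ℂ q)) • g ∧ S (star g) = (-q⁻¹) • star g ∧
  (∀ p : ℤ, ∀ x ∈ suqHomog a g p, S x ∈ suqHomog a g p) ∧
  (∀ p r : ℤ, ∀ x ∈ suqHomog a g p, ∀ y ∈ suqHomog a g r,
    S (x * y) = ((q / starRingEnd ℂ q) ^ (-(p * r))) • (S y * S x))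

/-- The braided multiplication on `𝒜 ⊗ 𝒜`. -/
def SUqBraidedMul {A : Type*} [Ring A] [Algebra ℂ A] [StarRing A] (q : ℂ) (a g : A)
    (μ : A ⊗[ℂ] A →ₗ[ℂ] A ⊗[ℂ] A →ₗ[ℂ] A ⊗[ℂ] A) : Prop :=
  ∀ (x w : A) (r s : ℤ), ∀ y ∈ suqHomog a g r, ∀ z ∈ suqHomog a g s,
    μ (x ⊗ₜ[ℂ] y) (z ⊗ₜ[ℂ] w)
      = ((q / starRingEnd ℂ q) ^ (-(r * s))) • ((x * z) ⊗ₜ[ℂ] (y * w))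

/-- The characterizing properties of the comultiplication `Δ` (as a unital algebra
homomorphism into the braided tensor square with multiplication `μ`). -/
def SUqComul {A : Type*} [Ring A] [Algebra ℂ A] [StarRing A] (q : ℂ) (a g : A)
    (μ : A ⊗[ℂ] A →ₗ[ℂ] A ⊗[ℂ] A →ₗ[ℂ] A ⊗[ℂ] A) (Δ : A →ₗ[ℂ] A ⊗[ℂ] A) : Prop :=
  Δ 1 = 1 ⊗ₜ[ℂ] 1 ∧ (∀ x y : A, Δ (x * y) = μ (Δ x) (Δ y)) ∧
  Δ a = a ⊗ₜ[ℂ] a - q • ((star g) ⊗ₜ[ℂ] g) ∧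
  Δ g = g ⊗ₜ[ℂ] a + (star a) ⊗ₜ[ℂ] g ∧
  Δ (star a) = (star a) ⊗ₜ[ℂ] (star a) - q • (g ⊗ₜ[ℂ] (star g)) ∧
  Δ (star g) = (star g) ⊗ₜ[ℂ] (star a) + a ⊗ₜ[ℂ] (star g)

/-- The braided flip `c` on `𝒜 ⊗ 𝒜`. -/
def SUqFlip {A : Type*} [Ring A] [Algebra ℂ A] [StarRing A] (q : ℂ) (a g : A)
    (c : A ⊗[ℂ] A →ₗ[ℂ] A ⊗[ℂ] A) : Prop :=
  ∀ (p r : ℤ), ∀ x ∈ suqHomog a g p, ∀ y ∈ suqHomog a g r,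
    c (x ⊗ₜ[ℂ] y) = ((q / starRingEnd ℂ q) ^ (-(p * r))) • (y ⊗ₜ[ℂ] x)

/-- The Haar functional, defined on the basis. -/
def SUqHaar {A : Type*} [Ring A] [Algebra ℂ A] [StarRing A] (q : ℂ) (a g : A)
    (h : A →ₗ[ℂ] ℂ) : Prop :=
  ∀ i : ℤ × ℕ × ℕ, h (suqMono a g i) =
    if i.1 = 0 ∧ i.2.1 = i.2.2
    then (1 - (‖q‖ : ℂ) ^ 2) / (1 - (‖q‖ : ℂ) ^ (2 * (i.2.1 + 1)))
    else 0

/-! Both sides of `Δ (star x) = st (Δ x)` are conjugate-linear in `x`. Since `‖ζ‖ = 1`, the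
grading is multiplicative and `star` maps `𝒜_p` to `𝒜_{-p}`, the map `st` reverses the braided
product, `st (μ u v) = μ (st v) (st u)`: on homogeneous pure tensors this is an identity between
powers of `ζ`. As `Δ` is multiplicative for `μ`, the elements satisfying the identity form a
subalgebra, and it contains the generators `α, α*, γ, γ*` by direct computation. -/

theorem TensorProduct.span_image2_tmul_eq_top {R M N : Type*} [CommSemiring R]
    [AddCommMonoid M] [Module R M] [AddCommMonoid N] [Module R N] {s : Set M} {t : Set N}
    (hs : Submodule.span R s = ⊤) (ht : Submodule.span R t = ⊤) :
    Submodule.span R (Set.image2 (· ⊗ₜ[R] ·) s t) = ⊤ := by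
  rw [← TensorProduct.map₂_mk_top_top_eq_top, ← hs, ← ht, Submodule.map₂_span_span]
  rfl

section Commutation

variable {R M : Type*} [CommMonoid R] [Monoid M] [MulAction R M] [IsScalarTower R M M]
  [SMulCommClass R M M]

theorem pow_mul_eq_smul_mul_pow {x y : M} {c : R} (h : x * y = c • (y * x)) (n : ℕ) :
    x ^ n * y = c ^ n • (y * x ^ n) := by
  induction n with
  | zero => simp
  | succ n ih =>
    rw [pow_succ, mul_assoc, h, mul_smul_comm, ← mul_assoc, ih, smul_mul_assoc, smul_smul,
      mul_assoc, ← pow_succ, pow_succ c, mul_comm c]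

theorem mul_pow_mul_pow_mul_eq_smul {x₁ x₂ y : M} {c₁ c₂ : R} (h₁ : x₁ * y = c₁ • (y * x₁))
    (h₂ : x₂ * y = c₂ • (y * x₂)) (z : M) (m k : ℕ) :
    z * x₁ ^ m * x₂ ^ k * y = (c₁ ^ m * c₂ ^ k) • (z * y * x₁ ^ m * x₂ ^ k) := by
  rw [mul_assoc, pow_mul_eq_smul_mul_pow h₂, mul_smul_comm, ← mul_assoc, mul_assoc z,
    pow_mul_eq_smul_mul_pow h₁, mul_smul_comm, smul_mul_assoc, smul_smul, mul_comm (c₂ ^ k),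
    ← mul_assoc z]

end Commutation

namespace Commute

variable {M : Type*} [Monoid M] {x y : M}

theorem mul_pow_mul_pow_mul (h : Commute x y) (z : M) (m k : ℕ) :
    z * x ^ m * y ^ k * x = z * x ^ (m + 1) * y ^ k := by
  rw [mul_assoc, (h.pow_right k).symm.eq, ← mul_assoc, mul_assoc z, ← pow_succ]

theorem mul_mul_mul_pow_mul_pow (h : Commute x y) (z : M) (m k : ℕ) :
    z * (y * x) * x ^ m * y ^ k = z * x ^ (m + 1) * y ^ (k + 1) := by
  rw [← h.eq, ← mul_assoc, mul_assoc (z * x), (h.symm.pow_right m).eq, ← mul_assoc,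
    mul_assoc z, ← pow_succ', mul_assoc _ y, ← pow_succ']

end Commute

theorem mul_pow_mem_of_forall_mul_mem {R A : Type*} [Semiring R] [Semiring A] [Module R A]
    {𝒜 : ℤ → Submodule R A} {z : A} {e : ℤ}
    (hz : ∀ {p : ℤ} {x : A}, x ∈ 𝒜 p → x * z ∈ 𝒜 (p + e)) {p : ℤ} {x : A} (hx : x ∈ 𝒜 p)
    (n : ℕ) : x * z ^ n ∈ 𝒜 (p + n * e) := by
  induction n with
  | zero => simpa using hx
  | succ n ih =>
    rw [pow_succ, ← mul_assoc]
    convert hz ih using 2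
    push_cast
    ring

section BraidedStar

variable {A : Type*} [Ring A] [Algebra ℂ A] [StarRing A]
  (𝒜 : ℤ → Submodule ℂ A) {ζ : ℂ}
  {μ : A ⊗[ℂ] A →ₗ[ℂ] A ⊗[ℂ] A →ₗ[ℂ] A ⊗[ℂ] A} {st : A ⊗[ℂ] A →ₗ⋆[ℂ] A ⊗[ℂ] A}

theorem braidedStar_mul_tmul
    (hmul : ∀ {p r : ℤ} {x y : A}, x ∈ 𝒜 p → y ∈ 𝒜 r → x * y ∈ 𝒜 (p + r))
    (hstar : ∀ {p : ℤ} {x : A}, x ∈ 𝒜 p → star x ∈ 𝒜 (-p)) (hζ : ‖ζ‖ = 1)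
    (hμ : ∀ (x w : A) (r s : ℤ), ∀ y ∈ 𝒜 r, ∀ z ∈ 𝒜 s,
      μ (x ⊗ₜ[ℂ] y) (z ⊗ₜ[ℂ] w) = ζ ^ (-(r * s)) • ((x * z) ⊗ₜ[ℂ] (y * w)))
    (hst : ∀ (p r : ℤ), ∀ x ∈ 𝒜 p, ∀ y ∈ 𝒜 r,
      st (x ⊗ₜ[ℂ] y) = ζ ^ (-(p * r)) • ((star x) ⊗ₜ[ℂ] (star y)))
    {p r s t : ℤ} {x y z w : A} (hx : x ∈ 𝒜 p) (hy : y ∈ 𝒜 r) (hz : z ∈ 𝒜 s) (hw : w ∈ 𝒜 t) :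
    st (μ (x ⊗ₜ[ℂ] y) (z ⊗ₜ[ℂ] w)) = μ (st (z ⊗ₜ[ℂ] w)) (st (x ⊗ₜ[ℂ] y)) := by
  have hζ0 : ζ ≠ 0 := norm_ne_zero_iff.mp (by rw [hζ]; exact one_ne_zero)
  have hζstar : ∀ n : ℤ, starRingEnd ℂ (ζ ^ n) = ζ ^ (-n) := fun n => by
    rw [map_zpow₀, ← Complex.inv_eq_conj hζ, inv_zpow', zpow_neg]
  rw [hμ x w r s y hy z hz, map_smulₛₗ, hst _ _ _ (hmul hx hz) _ (hmul hy hw),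
    hst s t z hz w hw, hst p r x hx y hy, map_smul, map_smul, LinearMap.smul_apply,
    hμ _ _ _ _ _ (hstar hw) _ (hstar hx), star_mul, star_mul, hζstar, smul_smul, smul_smul,
    smul_smul, ← zpow_add₀ hζ0, ← zpow_add₀ hζ0, ← zpow_add₀ hζ0]
  congr 2
  ring

theorem braidedStar_mul
    (hmul : ∀ {p r : ℤ} {x y : A}, x ∈ 𝒜 p → y ∈ 𝒜 r → x * y ∈ 𝒜 (p + r))
    (hstar : ∀ {p : ℤ} {x : A}, x ∈ 𝒜 p → star x ∈ 𝒜 (-p)) (h𝒜 : ⨆ p, 𝒜 p = ⊤)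
    (hζ : ‖ζ‖ = 1)
    (hμ : ∀ (x w : A) (r s : ℤ), ∀ y ∈ 𝒜 r, ∀ z ∈ 𝒜 s,
      μ (x ⊗ₜ[ℂ] y) (z ⊗ₜ[ℂ] w) = ζ ^ (-(r * s)) • ((x * z) ⊗ₜ[ℂ] (y * w)))
    (hst : ∀ (p r : ℤ), ∀ x ∈ 𝒜 p, ∀ y ∈ 𝒜 r,
      st (x ⊗ₜ[ℂ] y) = ζ ^ (-(p * r)) • ((star x) ⊗ₜ[ℂ] (star y)))
    (u v : A ⊗[ℂ] A) : st (μ u v) = μ (st v) (st u) := by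
  have hspan : Submodule.span ℂ (Set.image2 (· ⊗ₜ[ℂ] ·) (⋃ p, (𝒜 p : Set A))
      (⋃ p, (𝒜 p : Set A))) = ⊤ := by
    rw [Submodule.iSup_eq_span] at h𝒜
    exact TensorProduct.span_image2_tmul_eq_top h𝒜 h𝒜
  have hpure : ∀ u ∈ Set.image2 (· ⊗ₜ[ℂ] ·) (⋃ p, (𝒜 p : Set A)) (⋃ p, (𝒜 p : Set A)),
      ∀ v, st (μ u v) = μ (st v) (st u) := by
    rintro _ ⟨x, ⟨_, ⟨p, rfl⟩, hx⟩, y, ⟨_, ⟨r, rfl⟩, hy⟩, rfl⟩ v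
    refine LinearMap.congr_fun (LinearMap.ext_on (f := st.comp (μ (x ⊗ₜ y)))
      (g := (μ.flip (st (x ⊗ₜ y))).comp st) hspan ?_) v
    rintro _ ⟨z, ⟨_, ⟨s, rfl⟩, hz⟩, w, ⟨_, ⟨t, rfl⟩, hw⟩, rfl⟩
    exact braidedStar_mul_tmul 𝒜 hmul hstar hζ hμ hst hx hy hz hw
  exact LinearMap.congr_fun (LinearMap.ext_on (f := st.comp (μ.flip v))
    (g := (μ (st v)).comp st) hspan fun u hu => hpure u hu v) u

end BraidedStar

theorem comul_star_eq_of_adjoin_eq_top {A : Type*} [Ring A] [Algebra ℂ A] [StarRing A]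
    [StarModule ℂ A] {s : Set A} (hs : Algebra.adjoin ℂ s = ⊤)
    {μ : A ⊗[ℂ] A →ₗ[ℂ] A ⊗[ℂ] A →ₗ[ℂ] A ⊗[ℂ] A} {Δ : A →ₗ[ℂ] A ⊗[ℂ] A}
    {st : A ⊗[ℂ] A →ₗ⋆[ℂ] A ⊗[ℂ] A} (hΔ1 : Δ 1 = 1 ⊗ₜ[ℂ] 1)
    (hΔmul : ∀ x y : A, Δ (x * y) = μ (Δ x) (Δ y)) (hst1 : st (1 ⊗ₜ[ℂ] 1) = 1 ⊗ₜ[ℂ] 1)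
    (hst_mul : ∀ u v, st (μ u v) = μ (st v) (st u))
    (hgen : ∀ x ∈ s, Δ (star x) = st (Δ x)) (x : A) : Δ (star x) = st (Δ x) := by
  have hx : x ∈ Algebra.adjoin ℂ s := hs ▸ Algebra.mem_top
  induction hx using Algebra.adjoin_induction with
  | mem x hx => exact hgen x hx
  | algebraMap c =>
    rw [← algebraMap_star_comm, Algebra.algebraMap_eq_smul_one, Algebra.algebraMap_eq_smul_one,
      map_smul, map_smul, map_smulₛₗ, hΔ1, hst1]
    rfl
  | add x y _ _ hx hy => rw [star_add, map_add, map_add, map_add, hx, hy]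
  | mul x y _ _ hx hy => rw [star_mul, hΔmul, hΔmul, hx, hy, hst_mul]

section Grading

theorem suqMono_natCast {A : Type*} [Ring A] [StarRing A] (a g : A) (n m k : ℕ) :
    suqMono a g (n, m, k) = a ^ n * g ^ m * star g ^ k := by
  simp [suqMono]

theorem suqMono_neg_natCast {A : Type*} [Ring A] [StarRing A] (a g : A) (n m k : ℕ) :
    suqMono a g (-n, m, k) = star a ^ n * g ^ m * star g ^ k := by
  unfold suqMono
  rcases n.eq_zero_or_pos with rfl | hn
  · simp
  · rw [if_neg (by omega), neg_neg, Int.toNat_natCast]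

variable {A : Type*} [Ring A] [Algebra ℂ A] [StarRing A] {a g : A}

theorem pow_mul_pow_mul_pow_mem_suqHomog (n : ℕ) {m k : ℕ} {p : ℤ} (hp : (m : ℤ) - k = p) :
    a ^ n * g ^ m * star g ^ k ∈ suqHomog a g p :=
  suqMono_natCast a g n m k ▸ Submodule.subset_span ⟨(n, m, k), hp, rfl⟩

theorem star_pow_mul_pow_mul_pow_mem_suqHomog (n : ℕ) {m k : ℕ} {p : ℤ}
    (hp : (m : ℤ) - k = p) : star a ^ n * g ^ m * star g ^ k ∈ suqHomog a g p :=
  suqMono_neg_natCast a g n m k ▸ Submodule.subset_span ⟨(-n, m, k), hp, rfl⟩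

theorem one_mem_suqHomog_zero : (1 : A) ∈ suqHomog a g 0 := by
  simpa using pow_mul_pow_mul_pow_mem_suqHomog (a := a) (g := g) 0 (m := 0) (k := 0) rfl

theorem a_mem_suqHomog_zero : a ∈ suqHomog a g 0 := by
  simpa using pow_mul_pow_mul_pow_mem_suqHomog (a := a) (g := g) 1 (m := 0) (k := 0) rfl

theorem star_a_mem_suqHomog_zero : star a ∈ suqHomog a g 0 := by
  simpa using star_pow_mul_pow_mul_pow_mem_suqHomog (a := a) (g := g) 1 (m := 0) (k := 0) rfl

theorem g_mem_suqHomog_one : g ∈ suqHomog a g 1 := by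
  simpa using pow_mul_pow_mul_pow_mem_suqHomog (a := a) (g := g) 0 (m := 1) (k := 0) rfl

theorem star_g_mem_suqHomog_neg_one : star g ∈ suqHomog a g (-1) := by
  simpa using pow_mul_pow_mul_pow_mem_suqHomog (a := a) (g := g) 0 (m := 0) (k := 1) rfl

theorem suqHomog_le {p : ℤ} {N : Submodule ℂ A}
    (hpow : ∀ n m k : ℕ, (m : ℤ) - k = p → a ^ n * g ^ m * star g ^ k ∈ N)
    (hstar_pow : ∀ n m k : ℕ, (m : ℤ) - k = p → star a ^ n * g ^ m * star g ^ k ∈ N) :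
    suqHomog a g p ≤ N := by
  refine Submodule.span_le.mpr ?_
  rintro _ ⟨⟨n, m, k⟩, hp, rfl⟩
  obtain ⟨n, rfl | rfl⟩ := Int.eq_nat_or_neg n
  · rw [suqMono_natCast]; exact hpow n m k hp
  · rw [suqMono_neg_natCast]; exact hstar_pow n m k hp

theorem iSup_suqHomog_eq_top (hspan : Submodule.span ℂ (Set.range (suqMono a g)) = ⊤) :
    ⨆ p, suqHomog a g p = ⊤ := by
  refine eq_top_iff.mpr (hspan ▸ Submodule.span_le.mpr ?_)
  rintro _ ⟨i, rfl⟩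
  exact Submodule.mem_iSup_of_mem _ (Submodule.subset_span ⟨i, rfl, rfl⟩)

theorem adjoin_eq_top_of_span_suqMono (hspan : Submodule.span ℂ (Set.range (suqMono a g)) = ⊤) :
    Algebra.adjoin ℂ {a, star a, g, star g} = ⊤ := by
  refine Algebra.eq_top_iff.mpr fun x => ?_
  suffices Submodule.span ℂ (Set.range (suqMono a g)) ≤
      Subalgebra.toSubmodule (Algebra.adjoin ℂ {a, star a, g, star g}) from
    this (hspan ▸ Submodule.mem_top)
  refine Submodule.span_le.mpr ?_
  rintro _ ⟨⟨n, m, k⟩, rfl⟩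
  change suqMono a g (n, m, k) ∈ Algebra.adjoin ℂ {a, star a, g, star g}
  unfold suqMono
  have hmem : ∀ x ∈ ({a, star a, g, star g} : Set A), x ∈ Algebra.adjoin ℂ {a, star a, g, star g} :=
    fun x hx => Algebra.subset_adjoin hx
  refine mul_mem (mul_mem ?_ (pow_mem (hmem g (by simp)) m)) (pow_mem (hmem (star g) (by simp)) k)
  split_ifs
  · exact pow_mem (hmem a (by simp)) _
  · exact pow_mem (hmem (star a) (by simp)) _

theorem mul_star_g_mem_suqHomog {p : ℤ} {x : A} (hx : x ∈ suqHomog a g p) :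
    x * star g ∈ suqHomog a g (p + -1) := by
  refine suqHomog_le (N := (suqHomog a g (p + -1)).comap (LinearMap.mulRight ℂ (star g))) ?_ ?_ hx
  · intro n m k hp
    rw [Submodule.mem_comap, LinearMap.mulRight_apply, mul_assoc, ← pow_succ]
    exact pow_mul_pow_mul_pow_mem_suqHomog n (by omega)
  · intro n m k hp
    rw [Submodule.mem_comap, LinearMap.mulRight_apply, mul_assoc, ← pow_succ]
    exact star_pow_mul_pow_mul_pow_mem_suqHomog n (by omega)

end Grading

namespace SUqRel

variable {A : Type*} [Ring A] [Algebra ℂ A] [StarRing A] {q : ℂ} {a g : A}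

theorem commute_g_star_g (hrel : SUqRel q a g) : Commute g (star g) := hrel.2.2.1

theorem g_mul_a (hq : q ≠ 0) (hrel : SUqRel q a g) :
    g * a = (starRingEnd ℂ q)⁻¹ • (a * g) := by
  rw [hrel.2.2.2.1, smul_smul, inv_mul_cancel₀ (by simpa using hq), one_smul]

theorem star_g_mul_a (hq : q ≠ 0) (hrel : SUqRel q a g) :
    star g * a = q⁻¹ • (a * star g) := by
  rw [hrel.2.2.2.2, smul_smul, inv_mul_cancel₀ hq, one_smul]

theorem g_mul_star_a [StarModule ℂ A] (hrel : SUqRel q a g) :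
    g * star a = starRingEnd ℂ q • (star a * g) := by
  simpa using congrArg star hrel.2.2.2.2

theorem star_g_mul_star_a [StarModule ℂ A] (hrel : SUqRel q a g) :
    star g * star a = q • (star a * star g) := by
  simpa using congrArg star hrel.2.2.2.1

theorem mul_a_mem_suqHomog (hq : q ≠ 0) (hrel : SUqRel q a g) {p : ℤ} {x : A}
    (hx : x ∈ suqHomog a g p) : x * a ∈ suqHomog a g p := by
  have hswap := mul_pow_mul_pow_mul_eq_smul (hrel.g_mul_a hq) (hrel.star_g_mul_a hq)
  refine suqHomog_le (N := (suqHomog a g p).comap (LinearMap.mulRight ℂ a)) ?_ ?_ hx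
  · intro n m k hp
    rw [Submodule.mem_comap, LinearMap.mulRight_apply, hswap, ← pow_succ]
    exact Submodule.smul_mem _ _ (pow_mul_pow_mul_pow_mem_suqHomog _ hp)
  · rintro (_ | n) m k hp <;> rw [Submodule.mem_comap, LinearMap.mulRight_apply, hswap] <;>
      refine Submodule.smul_mem _ _ ?_
    · simpa using pow_mul_pow_mul_pow_mem_suqHomog 1 hp
    · rw [pow_succ, mul_assoc _ (star a), eq_sub_of_add_eq hrel.1, mul_sub, mul_one, sub_mul,
        sub_mul, hrel.commute_g_star_g.mul_mul_mul_pow_mul_pow]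
      exact sub_mem (star_pow_mul_pow_mul_pow_mem_suqHomog n hp)
        (star_pow_mul_pow_mul_pow_mem_suqHomog n (by omega))

theorem mul_star_a_mem_suqHomog [StarModule ℂ A] (hrel : SUqRel q a g) {p : ℤ} {x : A}
    (hx : x ∈ suqHomog a g p) : x * star a ∈ suqHomog a g p := by
  have hswap := mul_pow_mul_pow_mul_eq_smul hrel.g_mul_star_a hrel.star_g_mul_star_a
  refine suqHomog_le (N := (suqHomog a g p).comap (LinearMap.mulRight ℂ (star a))) ?_ ?_ hx
  · rintro (_ | n) m k hp <;> rw [Submodule.mem_comap, LinearMap.mulRight_apply, hswap] <;>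
      refine Submodule.smul_mem _ _ ?_
    · simpa using star_pow_mul_pow_mul_pow_mem_suqHomog 1 hp
    · rw [pow_succ, mul_assoc _ a, eq_sub_of_add_eq hrel.2.1, mul_sub, mul_one, mul_smul_comm,
        sub_mul, sub_mul, smul_mul_assoc, smul_mul_assoc,
        hrel.commute_g_star_g.mul_mul_mul_pow_mul_pow]
      exact sub_mem (pow_mul_pow_mul_pow_mem_suqHomog n hp)
        (Submodule.smul_mem _ _ (pow_mul_pow_mul_pow_mem_suqHomog n (by omega)))
  · intro n m k hp
    rw [Submodule.mem_comap, LinearMap.mulRight_apply, hswap, ← pow_succ]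
    exact Submodule.smul_mem _ _ (star_pow_mul_pow_mul_pow_mem_suqHomog _ hp)

theorem mul_g_mem_suqHomog (hrel : SUqRel q a g) {p : ℤ} {x : A}
    (hx : x ∈ suqHomog a g p) : x * g ∈ suqHomog a g (p + 1) := by
  refine suqHomog_le (N := (suqHomog a g (p + 1)).comap (LinearMap.mulRight ℂ g)) ?_ ?_ hx
  · intro n m k hp
    rw [Submodule.mem_comap, LinearMap.mulRight_apply,
      hrel.commute_g_star_g.mul_pow_mul_pow_mul]
    exact pow_mul_pow_mul_pow_mem_suqHomog n (by omega)
  · intro n m k hp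
    rw [Submodule.mem_comap, LinearMap.mulRight_apply,
      hrel.commute_g_star_g.mul_pow_mul_pow_mul]
    exact star_pow_mul_pow_mul_pow_mem_suqHomog n (by omega)

theorem mul_mem_suqHomog [StarModule ℂ A] (hq : q ≠ 0) (hrel : SUqRel q a g) {p r : ℤ}
    {x y : A} (hx : x ∈ suqHomog a g p) (hy : y ∈ suqHomog a g r) :
    x * y ∈ suqHomog a g (p + r) := by
  have key : ∀ {w : A}, x * w ∈ suqHomog a g p → ∀ m k : ℕ, (m : ℤ) - k = r →
      x * (w * g ^ m * star g ^ k) ∈ suqHomog a g (p + r) := by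
    intro w hw m k hr
    rw [← mul_assoc, ← mul_assoc]
    convert mul_pow_mem_of_forall_mul_mem (𝒜 := suqHomog a g) mul_star_g_mem_suqHomog
      (mul_pow_mem_of_forall_mul_mem (𝒜 := suqHomog a g) hrel.mul_g_mem_suqHomog hw m) k
      using 2
    omega
  refine suqHomog_le (N := (suqHomog a g (p + r)).comap (LinearMap.mulLeft ℂ x))
    (fun n m k hr => Submodule.mem_comap.mpr (key ?_ m k hr))
    (fun n m k hr => Submodule.mem_comap.mpr (key ?_ m k hr)) hy
  · have h := mul_pow_mem_of_forall_mul_mem (𝒜 := suqHomog a g) (e := 0)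
      (fun h => by rw [add_zero]; exact hrel.mul_a_mem_suqHomog hq h) hx n
    rwa [mul_zero, add_zero] at h
  · have h := mul_pow_mem_of_forall_mul_mem (𝒜 := suqHomog a g) (e := 0)
      (fun h => by rw [add_zero]; exact hrel.mul_star_a_mem_suqHomog h) hx n
    rwa [mul_zero, add_zero] at h

theorem star_mem_suqHomog [StarModule ℂ A] (hq : q ≠ 0) (hrel : SUqRel q a g) {p : ℤ} {x : A}
    (hx : x ∈ suqHomog a g p) : star x ∈ suqHomog a g (-p) := by
  have key : ∀ {w : A}, star w ∈ suqHomog a g 0 → ∀ m k : ℕ, (m : ℤ) - k = p →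
      star (w * g ^ m * star g ^ k) ∈ suqHomog a g (-p) := by
    intro w hw m k hp
    have hgk : g ^ k * star g ^ m ∈ suqHomog a g (k - m) := by
      simpa using pow_mul_pow_mul_pow_mem_suqHomog (a := a) (g := g) 0 (m := k) (k := m) rfl
    rw [star_mul, star_mul, star_pow, star_pow, star_star, ← mul_assoc]
    convert hrel.mul_mem_suqHomog hq hgk hw using 2
    omega
  refine suqHomog_le (N := (suqHomog a g (-p)).comap (starLinearEquiv ℂ).toLinearMap)
    (fun n m k hp => Submodule.mem_comap.mpr (key ?_ m k hp))
    (fun n m k hp => Submodule.mem_comap.mpr (key ?_ m k hp)) hx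
  · simpa using star_pow_mul_pow_mul_pow_mem_suqHomog (a := a) (g := g) n (m := 0) (k := 0) rfl
  · simpa using pow_mul_pow_mul_pow_mem_suqHomog (a := a) (g := g) n (m := 0) (k := 0) rfl

end SUqRel

theorem SUqComul.star_eq_of_mem_generators {A : Type*} [Ring A] [Algebra ℂ A] [StarRing A]
    {q : ℂ} (hq : q ≠ 0) {a g : A} {μ : A ⊗[ℂ] A →ₗ[ℂ] A ⊗[ℂ] A →ₗ[ℂ] A ⊗[ℂ] A}
    {Δ : A →ₗ[ℂ] A ⊗[ℂ] A} (hΔ : SUqComul q a g μ Δ) {st : A ⊗[ℂ] A →ₗ⋆[ℂ] A ⊗[ℂ] A}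
    (hst : ∀ (p r : ℤ), ∀ x ∈ suqHomog a g p, ∀ y ∈ suqHomog a g r,
      st (x ⊗ₜ[ℂ] y) = ((q / starRingEnd ℂ q) ^ (-(p * r))) • ((star x) ⊗ₜ[ℂ] (star y))) :
    ∀ x ∈ ({a, star a, g, star g} : Set A), Δ (star x) = st (Δ x) := by
  obtain ⟨-, -, hΔa, hΔg, hΔas, hΔgs⟩ := hΔ
  have hconj : starRingEnd ℂ q * (q / starRingEnd ℂ q) = q :=
    mul_div_cancel₀ q (by simpa using hq)
  simp only [Set.mem_insert_iff, Set.mem_singleton_iff]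
  rintro x (rfl | rfl | rfl | rfl)
  · rw [hΔas, hΔa, map_sub, map_smulₛₗ, hst 0 0 _ a_mem_suqHomog_zero _ a_mem_suqHomog_zero,
      hst (-1) 1 _ star_g_mem_suqHomog_neg_one _ g_mem_suqHomog_one]
    norm_num [smul_smul, hconj]
  · rw [star_star, hΔa, hΔas, map_sub, map_smulₛₗ,
      hst 0 0 _ star_a_mem_suqHomog_zero _ star_a_mem_suqHomog_zero,
      hst 1 (-1) _ g_mem_suqHomog_one _ star_g_mem_suqHomog_neg_one]
    norm_num [smul_smul, hconj]
  · rw [hΔgs, hΔg, map_add, hst 1 0 _ g_mem_suqHomog_one _ a_mem_suqHomog_zero,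
      hst 0 1 _ star_a_mem_suqHomog_zero _ g_mem_suqHomog_one]
    norm_num
  · rw [star_star, hΔg, hΔgs, map_add,
      hst (-1) 0 _ star_g_mem_suqHomog_neg_one _ star_a_mem_suqHomog_zero,
      hst 0 (-1) _ a_mem_suqHomog_zero _ star_g_mem_suqHomog_neg_one]
    norm_num

theorem suq_comul_star_general {A : Type*} [Ring A] [Algebra ℂ A] [StarRing A] [StarModule ℂ A]
    (q : ℂ) (hq0 : 0 < ‖q‖)
    (a g : A) (hrel : SUqRel q a g) (hbasis : SUqBasis a g)
    (μ : A ⊗[ℂ] A →ₗ[ℂ] A ⊗[ℂ] A →ₗ[ℂ] A ⊗[ℂ] A) (hμ : SUqBraidedMul q a g μ)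
    (Δ : A →ₗ[ℂ] A ⊗[ℂ] A) (hΔ : SUqComul q a g μ Δ)
    (st : A ⊗[ℂ] A →ₗ⋆[ℂ] A ⊗[ℂ] A)
    (hst : ∀ (p r : ℤ), ∀ x ∈ suqHomog a g p, ∀ y ∈ suqHomog a g r,
      st (x ⊗ₜ[ℂ] y) = ((q / starRingEnd ℂ q) ^ (-(p * r))) • ((star x) ⊗ₜ[ℂ] (star y))) :
    ∀ x : A, Δ (star x) = st (Δ x) := by
  have hq : q ≠ 0 := norm_pos_iff.mp hq0
  have hζ : ‖q / starRingEnd ℂ q‖ = 1 := by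
    rw [norm_div, Complex.norm_conj, div_self hq0.ne']
  have hst_mul : ∀ u v, st (μ u v) = μ (st v) (st u) :=
    braidedStar_mul (suqHomog a g) (hrel.mul_mem_suqHomog hq) (hrel.star_mem_suqHomog hq)
      (iSup_suqHomog_eq_top hbasis.2) hζ hμ hst
  have hst_one : st (1 ⊗ₜ[ℂ] 1) = 1 ⊗ₜ[ℂ] 1 := by
    simpa using hst 0 0 _ one_mem_suqHomog_zero _ one_mem_suqHomog_zero
  exact comul_star_eq_of_adjoin_eq_top (adjoin_eq_top_of_span_suqMono hbasis.2) hΔ.1 hΔ.2.1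
    hst_one hst_mul (hΔ.star_eq_of_mem_generators hq hst)

/-- Let `⋆` be the conjugate-linear map on `𝒜 ⊗[ℂ] 𝒜` determined by
`⋆(x⊗y) = ζ^{-pr}·x*⊗y*` for `x ∈ 𝒜_p`, `y ∈ 𝒜_r`. Then `Δ(a*) = ⋆(Δ(a))` for all
`a ∈ 𝒜`. -/
theorem suq_comul_star {A : Type*} [Ring A] [Algebra ℂ A] [StarRing A] [StarModule ℂ A]
    (q : ℂ) (hq0 : 0 < ‖q‖) (hq1 : ‖q‖ < 1)
    (a g : A) (hrel : SUqRel q a g) (hbasis : SUqBasis a g)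
    (μ : A ⊗[ℂ] A →ₗ[ℂ] A ⊗[ℂ] A →ₗ[ℂ] A ⊗[ℂ] A) (hμ : SUqBraidedMul q a g μ)
    (Δ : A →ₗ[ℂ] A ⊗[ℂ] A) (hΔ : SUqComul q a g μ Δ)
    (st : A ⊗[ℂ] A →ₗ⋆[ℂ] A ⊗[ℂ] A)
    (hst : ∀ (p r : ℤ), ∀ x ∈ suqHomog a g p, ∀ y ∈ suqHomog a g r,
      st (x ⊗ₜ[ℂ] y) = ((q / starRingEnd ℂ q) ^ (-(p * r))) • ((star x) ⊗ₜ[ℂ] (star y))) :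
    ∀ x : A, Δ (star x) = st (Δ x) :=
  suq_comul_star_general q hq0 a g hrel hbasis μ hμ Δ hΔ st hst
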